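/- Every natural number N can be written as the sum of three terms of the sequence (⌊n²/120⌋)_{n∈ℕ}, i.e., there exist natural numbers A, B, C with N = ⌊A²/120⌋ + ⌊B²/120⌋ + ⌊C²/120⌋. -/

import Mathlib

/-!
Choose `s ∈ {51, 75, 99}` with `120 N + s ≡ 3` modulo both `8` and `9`. Every `m ≡ 3 (mod 8)` is
a sum of three squares `x² + y² + z²`; the congruences modulo `8` and `9` force `x, y, z` to be
odd and prime to `3`, so each of `x², y², z²` is `1`, `25` or `49` modulo `120`. The residues then
add up to exactly `s`, so `N = ⌊x²/120⌋ + ⌊y²/120⌋ + ⌊z²/120⌋`.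

The three-square theorem for `m ≡ 3 (mod 8)` follows Ankeny: Dirichlet's theorem gives a prime
`q ≡ 1 (mod 4)` with `m ∣ 2q + 1`, modulo which `m` is a square by quadratic reciprocity; a
pigeonhole argument then solves `X² + 2qY² = mZ²`, writing `2q = (c + d)² + (c - d)²` makes `mZ²`
a sum of three squares, and the Davenport–Cassels descent removes the denominator `Z`.
-/

open scoped NumberTheorySymbols

lemma Int.exists_four_mul_sq_sub_mul_le (x : ℤ) {w : ℤ} (hw : 0 < w) :
    ∃ a : ℤ, 4 * (x - a * w) ^ 2 ≤ w ^ 2 := by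
  refine ⟨(2 * x + w) / (2 * w), ?_⟩
  have h0 := Int.emod_nonneg (2 * x + w) (by positivity : 2 * w ≠ 0)
  have h1 := Int.emod_lt_of_pos (2 * x + w) (by positivity : 0 < 2 * w)
  have h2 := Int.ediv_mul_add_emod (2 * x + w) (2 * w)
  nlinarith [mul_nonneg h0 (by linarith : 0 ≤ 2 * w - (2 * x + w) % (2 * w))]

lemma Int.exists_sum_three_sq_or_exists_smaller_mul_sq {n w x y z : ℤ} (hw : 0 < w)
    (h : x ^ 2 + y ^ 2 + z ^ 2 = n * w ^ 2) :
    (∃ a b c : ℤ, a ^ 2 + b ^ 2 + c ^ 2 = n) ∨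
      ∃ w' x' y' z' : ℤ, 0 < w' ∧ w' < w ∧ x' ^ 2 + y' ^ 2 + z' ^ 2 = n * w' ^ 2 := by
  obtain ⟨a, ha⟩ := exists_four_mul_sq_sub_mul_le x hw
  obtain ⟨b, hb⟩ := exists_four_mul_sq_sub_mul_le y hw
  obtain ⟨c, hc⟩ := exists_four_mul_sq_sub_mul_le z hw
  -- `w' = w ‖(x, y, z) / w - (a, b, c)‖² ≤ 3w/4` is the denominator of the second point where the
  -- line through `(x, y, z) / w` and `(a, b, c)` meets the sphere of radius `√n`.
  obtain ⟨w', hw'⟩ : ∃ w', w' = n * w - 2 * (a * x + b * y + c * z) + w * (a ^ 2 + b ^ 2 + c ^ 2) :=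
    ⟨_, rfl⟩
  have hww' : w * w' = (x - a * w) ^ 2 + (y - b * w) ^ 2 + (z - c * w) ^ 2 := by
    linear_combination w * hw' - h
  rcases (hww' ▸ by positivity : 0 ≤ w * w').eq_or_lt with h0 | hpos
  · left
    have hx : x = a * w := by nlinarith
    have hy : y = b * w := by nlinarith
    have hz : z = c * w := by nlinarith
    refine ⟨a, b, c, mul_right_cancel₀ (pow_ne_zero 2 hw.ne') ?_⟩
    subst hx hy hz
    linear_combination h
  · right
    have hw'0 : 0 < w' := pos_of_mul_pos_right hpos hw.le
    refine ⟨w', w' * a + (a ^ 2 + b ^ 2 + c ^ 2 - n) * (x - a * w),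
      w' * b + (a ^ 2 + b ^ 2 + c ^ 2 - n) * (y - b * w),
      w' * c + (a ^ 2 + b ^ 2 + c ^ 2 - n) * (z - c * w), hw'0, by nlinarith, ?_⟩
    subst hw'
    linear_combination (a ^ 2 + b ^ 2 + c ^ 2 - n) ^ 2 * h

theorem Int.exists_sum_three_sq_of_mul_sq {n w x y z : ℤ} (hw : 0 < w)
    (h : x ^ 2 + y ^ 2 + z ^ 2 = n * w ^ 2) : ∃ a b c : ℤ, a ^ 2 + b ^ 2 + c ^ 2 = n := by
  rcases exists_sum_three_sq_or_exists_smaller_mul_sq hw h with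
    h' | ⟨w', x', y', z', hw'0, hw'w, h'⟩
  · exact h'
  · exact exists_sum_three_sq_of_mul_sq hw'0 h'
termination_by w.toNat
decreasing_by omega

lemma exists_ne_zero_map_eq_zero_of_card_lt {G : Type*} [AddCommGroup G] [Fintype G]
    (f : ℤ × ℤ × ℤ →+ G) {X Y Z : ℕ} (h : Fintype.card G < (X + 1) * (Y + 1) * (Z + 1)) :
    ∃ v : ℤ × ℤ × ℤ, v ≠ 0 ∧ f v = 0 ∧
      v.1.natAbs ≤ X ∧ v.2.1.natAbs ≤ Y ∧ v.2.2.natAbs ≤ Z := by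
  let g : Fin (X + 1) × Fin (Y + 1) × Fin (Z + 1) → G :=
    fun t => f ((t.1 : ℤ), (t.2.1 : ℤ), (t.2.2 : ℤ))
  obtain ⟨s, t, hst, hg⟩ := Fintype.exists_ne_map_eq_of_card_lt g (by simpa [mul_assoc] using h)
  refine ⟨((s.1 : ℤ), (s.2.1 : ℤ), (s.2.2 : ℤ)) - ((t.1 : ℤ), (t.2.1 : ℤ), (t.2.2 : ℤ)),
    ?_, by rw [map_sub, sub_eq_zero]; exact hg, ?_, ?_, ?_⟩
  · rw [Ne, sub_eq_zero]
    intro hst'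
    simp only [Prod.mk.injEq, Nat.cast_inj, Fin.val_inj] at hst'
    exact hst (Prod.ext hst'.1 (Prod.ext hst'.2.1 hst'.2.2))
  all_goals simp only [Prod.fst_sub, Prod.snd_sub]; omega

lemma Nat.not_isSquare_of_mod_four {m : ℕ} (h : m % 4 = 2 ∨ m % 4 = 3) : ¬ IsSquare m := by
  rintro ⟨r, rfl⟩
  have := Nat.mul_mod r r 4
  have : r % 4 < 4 := Nat.mod_lt _ (by norm_num)
  interval_cases r % 4 <;> omega

lemma Int.sq_lt_of_natAbs_le_sqrt {x : ℤ} {m : ℕ} (hx : x.natAbs ≤ Nat.sqrt m)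
    (hm : ¬ IsSquare m) : x ^ 2 < m := by
  have hlt : Nat.sqrt m * Nat.sqrt m < m :=
    (Nat.sqrt_le m).lt_of_ne fun h => hm ⟨_, h.symm⟩
  have : x.natAbs ^ 2 < m := by nlinarith [Nat.mul_le_mul hx hx]
  rw [← Int.natAbs_sq]
  exact_mod_cast this

lemma Nat.lt_sqrt_succ_mul_sqrt_succ_mul_sqrt_succ {a b c k : ℕ} (h : a * b * c = k ^ 2) :
    k < (Nat.sqrt a + 1) * (Nat.sqrt b + 1) * (Nat.sqrt c + 1) := by
  have ha := Nat.lt_succ_sqrt' a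
  have hb := Nat.lt_succ_sqrt' b
  have hc := Nat.lt_succ_sqrt' c
  refine lt_of_pow_lt_pow_left₀ 2 (by positivity) ?_
  calc k ^ 2 = a * b * c := h.symm
    _ < (Nat.sqrt a + 1) ^ 2 * (Nat.sqrt b + 1) ^ 2 * (Nat.sqrt c + 1) ^ 2 := by gcongr
    _ = _ := by ring

lemma two_mul_mul_dvd_sq_add_two_mul_sq_sub {n q : ℕ} (hn : Odd n) (hq : Odd q)
    (hnq : n.Coprime q) (hdvd : n ∣ 2 * q + 1) {τ : ZMod q} (hτ : τ ^ 2 = n) {x y z : ℤ}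
    (hxy : (x : ZMod n) = y) (hxz : (x : ZMod q) = τ * z) (hxz₂ : (x : ZMod 2) = z) :
    (2 * n * q : ℤ) ∣ x ^ 2 + 2 * q * y ^ 2 - n * z ^ 2 := by
  have h₂ : (2 : ℤ) ∣ x ^ 2 + 2 * q * y ^ 2 - n * z ^ 2 := by
    have hn₂ : (n : ZMod 2) = 1 := ZMod.natCast_eq_one_iff_odd.2 hn
    have h2 : (2 : ZMod 2) = 0 := rfl
    refine (ZMod.intCast_zmod_eq_zero_iff_dvd _ 2).1 ?_
    push_cast
    linear_combination (x + z) * hxz₂ + (q * y ^ 2) * h2 - z ^ 2 * hn₂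
  have hn' : (n : ℤ) ∣ x ^ 2 + 2 * q * y ^ 2 - n * z ^ 2 := by
    have h0 : ((2 * q + 1 : ℕ) : ZMod n) = 0 := (ZMod.natCast_eq_zero_iff _ _).2 hdvd
    rw [← ZMod.intCast_zmod_eq_zero_iff_dvd]
    push_cast at h0 ⊢
    linear_combination (x + y) * hxy + y ^ 2 * h0 - z ^ 2 * ZMod.natCast_self n
  have hq' : (q : ℤ) ∣ x ^ 2 + 2 * q * y ^ 2 - n * z ^ 2 := by
    rw [← ZMod.intCast_zmod_eq_zero_iff_dvd]
    push_cast
    linear_combination (x + τ * z) * hxz + z ^ 2 * hτ + 2 * y ^ 2 * ZMod.natCast_self q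
  have hnq' : IsCoprime (n : ℤ) q := Nat.isCoprime_iff_coprime.2 hnq
  have h2nq : IsCoprime (2 : ℤ) (n * q) := by
    exact_mod_cast Nat.isCoprime_iff_coprime.2 (Nat.coprime_two_left.2 (hn.mul hq))
  rw [mul_assoc]
  exact h2nq.mul_dvd h₂ (hnq'.mul_dvd hn' hq')

lemma exists_sq_add_two_mul_sq_eq_mul_sq_of_dvd {n q x y z : ℤ} (hn : 0 < n) (hq : 0 < q)
    (hxyz : (x, y, z) ≠ 0) (hx : x ^ 2 < 2 * q * n) (hy : y ^ 2 < n) (hz : z ^ 2 < 2 * q)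
    (hdvd : 2 * n * q ∣ x ^ 2 + 2 * q * y ^ 2 - n * z ^ 2) :
    ∃ X Y Z : ℤ, 0 < Z ∧ X ^ 2 + 2 * q * Y ^ 2 = n * Z ^ 2 := by
  obtain ⟨k, hk⟩ := hdvd
  have hnq : 0 < 2 * n * q := by positivity
  have hk2 : k < 2 := by nlinarith [sq_nonneg z]
  have hk0 : -1 < k := by nlinarith [sq_nonneg x, sq_nonneg y]
  obtain rfl | rfl : k = 0 ∨ k = 1 := by omega
  · have hz0 : z ≠ 0 := by
      rintro rfl
      have hx0 : x = 0 := by nlinarith [sq_nonneg x, sq_nonneg y]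
      have hy0 : y = 0 := by nlinarith [sq_nonneg x, sq_nonneg y]
      exact hxyz (by simp [hx0, hy0])
    exact ⟨x, y, |z|, abs_pos.2 hz0, by rw [sq_abs]; linear_combination hk⟩
  · -- `(x² + 2qy²)(z² + 2q) = (xz + 2qy)² + 2q(yz - x)²`, and here `x² + 2qy² = n(z² + 2q)`
    exact ⟨x * z + 2 * q * y, y * z - x, z ^ 2 + 2 * q, by positivity,
      by linear_combination (z ^ 2 + 2 * q) * hk⟩

theorem exists_sq_add_two_mul_sq_eq_mul_sq {n q : ℕ} (hn : Odd n) (hn_sq : ¬ IsSquare n)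
    (hq : Odd q) (hnq : n.Coprime q) (hdvd : n ∣ 2 * q + 1) {τ : ZMod q} (hτ : τ ^ 2 = n) :
    ∃ X Y Z : ℤ, 0 < Z ∧ X ^ 2 + 2 * q * Y ^ 2 = n * Z ^ 2 := by
  have : NeZero n := ⟨hn.pos.ne'⟩
  have : NeZero q := ⟨hq.pos.ne'⟩
  let f : ℤ × ℤ × ℤ →+ ZMod n × ZMod q × ZMod 2 :=
    { toFun := fun v => (((v.1 - v.2.1 : ℤ) : ZMod n), (v.1 : ZMod q) - τ * v.2.2,
        ((v.1 - v.2.2 : ℤ) : ZMod 2))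
      map_zero' := by simp
      map_add' := fun v w => by
        ext <;> simp only [Prod.fst_add, Prod.snd_add, Int.cast_sub, Int.cast_add,
          Prod.mk_add_mk] <;> ring }
  have hcard : Fintype.card (ZMod n × ZMod q × ZMod 2) <
      (Nat.sqrt (2 * q * n) + 1) * (Nat.sqrt n + 1) * (Nat.sqrt (2 * q) + 1) := by
    simp only [Fintype.card_prod, ZMod.card]
    exact Nat.lt_sqrt_succ_mul_sqrt_succ_mul_sqrt_succ (by ring)
  obtain ⟨⟨x, y, z⟩, hv0, hfv, hx, hy, hz⟩ := exists_ne_zero_map_eq_zero_of_card_lt f hcard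
  simp only [f, AddMonoidHom.coe_mk, ZeroHom.coe_mk, Prod.mk_eq_zero, Int.cast_sub,
    sub_eq_zero] at hfv
  refine exists_sq_add_two_mul_sq_eq_mul_sq_of_dvd (by exact_mod_cast hn.pos)
    (by exact_mod_cast hq.pos) hv0 ?_ (Int.sq_lt_of_natAbs_le_sqrt hy hn_sq) ?_
    (two_mul_mul_dvd_sq_add_two_mul_sq_sub hn hq hnq hdvd hτ hfv.1 hfv.2.1 hfv.2.2)
  · have hodd : (q * n) % 2 = 1 := Nat.odd_iff.1 (hq.mul hn)
    have := Int.sq_lt_of_natAbs_le_sqrt hx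
      (Nat.not_isSquare_of_mod_four (Or.inl (by rw [mul_assoc]; omega)))
    push_cast at this
    linarith
  · have := Int.sq_lt_of_natAbs_le_sqrt hz
      (Nat.not_isSquare_of_mod_four (Or.inl (by have := Nat.odd_iff.1 hq; omega)))
    push_cast at this
    linarith

lemma exists_prime_one_mod_four_dvd_two_mul_add_one {n : ℕ} (hn : n % 8 = 3) :
    ∃ q : ℕ, q.Prime ∧ n < q ∧ q % 4 = 1 ∧ n ∣ 2 * q + 1 := by
  obtain ⟨k, rfl⟩ : ∃ k, n = 8 * k + 3 := ⟨n / 8, by omega⟩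
  -- Dirichlet's theorem for the class of `4k + 1` modulo `4n`; note `2 (4k + 1) + 1 = n`.
  obtain ⟨q, hqn, hq, hqmod⟩ := Nat.forall_exists_prime_gt_and_zmodEq (8 * k + 3)
    (q := 4 * (8 * k + 3)) (a := 4 * k + 1) (by positivity) ⟨8 * k + 1, -k, by push_cast; ring⟩
  have hdiv : ((4 * (8 * k + 3) : ℕ) : ℤ) ∣ 4 * k + 1 - q := hqmod.dvd
  push_cast at hdiv
  refine ⟨q, hq, hqn, ?_, ?_⟩
  · have : (4 : ℤ) ∣ 4 * k + 1 - q := (dvd_mul_right 4 _).trans hdiv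
    omega
  · have h : ((8 * k + 3 : ℕ) : ℤ) ∣ 8 * k + 3 - 2 * (4 * k + 1 - q) := by
      push_cast
      exact dvd_sub dvd_rfl (((dvd_mul_left _ 4).trans hdiv).mul_left 2)
    rw [show (8 * k + 3 - 2 * (4 * k + 1 - q) : ℤ) = ((2 * q + 1 : ℕ) : ℤ) by push_cast; ring] at h
    exact Int.natCast_dvd_natCast.1 h

lemma jacobiSym_eq_one_of_dvd_two_mul_add_one {n q : ℕ} (hn : n % 8 = 3)
    (hdvd : n ∣ 2 * q + 1) : J(q | n) = 1 := by
  have hn_odd : Odd n := Nat.odd_iff.2 (by omega)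
  have hgcd : (2 : ℤ).gcd n = 1 := by
    exact_mod_cast Nat.coprime_two_left.2 hn_odd
  have hmod : (2 ^ 2 * q : ℤ) % n = -2 % n := by
    refine Int.emod_eq_emod_iff_emod_sub_eq_zero.2 (Int.emod_eq_zero_of_dvd ?_)
    rw [show (2 ^ 2 * q - -2 : ℤ) = 2 * ((2 * q + 1 : ℕ) : ℤ) by push_cast; ring]
    exact dvd_mul_of_dvd_right (Int.natCast_dvd_natCast.2 hdvd) 2
  calc J(q | n) = J(2 ^ 2 | n) * J(q | n) := by rw [jacobiSym.sq_one' hgcd, one_mul]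
    _ = J(2 ^ 2 * q | n) := (jacobiSym.mul_left _ _ _).symm
    _ = J(-2 | n) := jacobiSym.mod_left' hmod
    _ = 1 := by
      rw [jacobiSym.at_neg_two hn_odd, ZMod.χ₈'_nat_eq_if_mod_eight]
      simp [hn, Nat.odd_iff.1 hn_odd]

lemma isSquare_natCast_zmod_of_dvd_two_mul_add_one {n q : ℕ} [Fact q.Prime] (hn : n % 8 = 3)
    (hq : q % 4 = 1) (hnq : ¬ q ∣ n) (hdvd : n ∣ 2 * q + 1) : IsSquare (n : ZMod q) := by
  have hJ : J(n | q) = 1 := by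
    rw [← jacobiSym.quadratic_reciprocity_one_mod_four hq (Nat.odd_iff.2 (by omega))]
    exact jacobiSym_eq_one_of_dvd_two_mul_add_one hn hdvd
  rw [← legendreSym.eq_one_iff' q (by rwa [Ne, ZMod.natCast_eq_zero_iff]),
    jacobiSym.legendreSym.to_jacobiSym]
  exact_mod_cast hJ

theorem Nat.exists_sum_three_sq_of_mod_eight_eq_three {n : ℕ} (hn : n % 8 = 3) :
    ∃ x y z : ℕ, x ^ 2 + y ^ 2 + z ^ 2 = n := by
  obtain ⟨q, hq, hnq, hq4, hdvd⟩ := exists_prime_one_mod_four_dvd_two_mul_add_one hn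
  have : Fact q.Prime := ⟨hq⟩
  have hqn : ¬ q ∣ n := fun h => (Nat.le_of_dvd (by omega) h).not_gt hnq
  obtain ⟨τ, hτ⟩ := isSquare_natCast_zmod_of_dvd_two_mul_add_one hn hq4 hqn hdvd
  obtain ⟨X, Y, Z, hZ, hXYZ⟩ := exists_sq_add_two_mul_sq_eq_mul_sq (Nat.odd_iff.2 (by omega))
    (Nat.not_isSquare_of_mod_four (by omega)) (Nat.odd_iff.2 (by omega))
    (Nat.coprime_comm.1 (hq.coprime_iff_not_dvd.2 hqn)) hdvd (τ := τ) (by rw [sq, hτ])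
  obtain ⟨c, d, hcd⟩ := Nat.Prime.sq_add_sq (p := q) (by omega)
  -- `2q = (c + d)² + (c - d)²` turns `X² + 2qY² = nZ²` into a sum of three squares
  obtain ⟨a, b, e, habe⟩ := Int.exists_sum_three_sq_of_mul_sq hZ
    (x := X) (y := (c + d) * Y) (z := (c - d) * Y) (by rw [← hXYZ, ← hcd]; push_cast; ring)
  refine ⟨a.natAbs, b.natAbs, e.natAbs, ?_⟩
  zify
  simpa only [sq_abs] using habe

lemma Nat.odd_of_sum_three_sq_mod_eight {x y z : ℕ} (h : (x ^ 2 + y ^ 2 + z ^ 2) % 8 = 3) :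
    x % 2 = 1 := by
  have key : ∀ a < 8, ∀ b < 8, ∀ c < 8, (a ^ 2 + b ^ 2 + c ^ 2) % 8 = 3 → a % 2 = 1 := by
    decide
  have := key (x % 8) (Nat.mod_lt _ (by norm_num)) (y % 8) (Nat.mod_lt _ (by norm_num))
    (z % 8) (Nat.mod_lt _ (by norm_num)) (by simpa [Nat.add_mod, Nat.pow_mod] using h)
  omega

lemma Nat.mod_three_ne_zero_of_sum_three_sq_mod_nine {x y z : ℕ}
    (h : (x ^ 2 + y ^ 2 + z ^ 2) % 9 = 3) : x % 3 ≠ 0 := by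
  have key : ∀ a < 9, ∀ b < 9, ∀ c < 9, (a ^ 2 + b ^ 2 + c ^ 2) % 9 = 3 → a % 3 ≠ 0 := by
    decide
  have := key (x % 9) (Nat.mod_lt _ (by norm_num)) (y % 9) (Nat.mod_lt _ (by norm_num))
    (z % 9) (Nat.mod_lt _ (by norm_num)) (by simpa [Nat.add_mod, Nat.pow_mod] using h)
  omega

lemma Nat.sq_mod_120_le {x : ℕ} (h2 : x % 2 = 1) (h3 : x % 3 ≠ 0) : x ^ 2 % 120 ≤ 49 := by
  have key : ∀ a < 120, a % 2 = 1 → a % 3 ≠ 0 → a ^ 2 % 120 ≤ 49 := by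
    decide
  rw [Nat.pow_mod]
  exact key (x % 120) (Nat.mod_lt _ (by norm_num)) (by omega) (by omega)

lemma Nat.sq_mod_120_le_of_sum_three_sq {x y z : ℕ} (h8 : (x ^ 2 + y ^ 2 + z ^ 2) % 8 = 3)
    (h9 : (x ^ 2 + y ^ 2 + z ^ 2) % 9 = 3) : x ^ 2 % 120 ≤ 49 :=
  Nat.sq_mod_120_le (Nat.odd_of_sum_three_sq_mod_eight h8)
    (Nat.mod_three_ne_zero_of_sum_three_sq_mod_nine h9)

theorem stmt_9 (N : ℕ) :
    ∃ A B C : ℕ, N = A ^ 2 / 120 + B ^ 2 / 120 + C ^ 2 / 120 := by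
  set s := 51 + 24 * ((N + 1) % 3)
  obtain ⟨x, y, z, hxyz⟩ :=
    Nat.exists_sum_three_sq_of_mod_eight_eq_three (n := 120 * N + s) (by omega)
  have h8 : (x ^ 2 + y ^ 2 + z ^ 2) % 8 = 3 := by omega
  have h9 : (x ^ 2 + y ^ 2 + z ^ 2) % 9 = 3 := by omega
  have hx := Nat.sq_mod_120_le_of_sum_three_sq h8 h9
  have hy := Nat.sq_mod_120_le_of_sum_three_sq (x := y) (y := x) (z := z) (by omega) (by omega)
  have hz := Nat.sq_mod_120_le_of_sum_three_sq (x := z) (y := x) (z := y) (by omega) (by omega)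
  -- the residues mod `120` add up to at most `3 * 49 < s + 120`, hence to exactly `s`
  refine ⟨x, y, z, ?_⟩
  have := Nat.div_add_mod (x ^ 2) 120
  have := Nat.div_add_mod (y ^ 2) 120
  have := Nat.div_add_mod (z ^ 2) 120
  omega
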